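/- arXiv:2311.07813 — 2 statements merged into one kernel-verified Lean document; each statement's English description precedes it below -/
import Mathlib

section
/- A subset of a separable metric space that is a countable union of subsets each of topological dimension 0 (each of which is, say, closed in the union, or more generally F_sigma) has topological dimension 0. -/
open Set Topology

/-- Covering dimension ≤ 0: every finite open cover admits a pairwise disjoint
open refinement that still covers. -/
def CovDimZero (X : Type*) [TopologicalSpace X] : Prop :=
  ∀ (n : ℕ) (U : Fin n → Set X), (∀ i, IsOpen (U i)) → (⋃ i, U i) = Set.univ →
    ∃ V : Fin n → Set X, (∀ i, IsOpen (V i)) ∧ (∀ i, V i ⊆ U i) ∧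
      (⋃ i, V i) = Set.univ ∧ Pairwise (Function.onFun Disjoint V)

/-- Separation property characterizing dimension ≤ 0 : any two disjoint closed sets
can be separated by a clopen set. -/
def SepZero (Y : Type*) [TopologicalSpace Y] : Prop :=
  ∀ C D : Set Y, IsClosed C → IsClosed D → Disjoint C D →
    ∃ E : Set Y, IsOpen E ∧ IsClosed E ∧ C ⊆ E ∧ Disjoint E D

lemma covDimZero_of_homeomorph {Y Z : Type*} [TopologicalSpace Y] [TopologicalSpace Z]
    (e : Y ≃ₜ Z) (h : CovDimZero Y) : CovDimZero Z := by
  intro n U hUo hUc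
  obtain ⟨V, hVo, hVU, hVc, hVd⟩ := h n (fun i => e ⁻¹' U i)
    (fun i => (hUo i).preimage e.continuous)
    (by rw [← Set.preimage_iUnion, hUc, Set.preimage_univ])
  refine ⟨fun i => e.symm ⁻¹' V i, fun i => (hVo i).preimage e.symm.continuous, ?_, ?_, ?_⟩
  · intro i x hx
    have := hVU i hx
    simpa using this
  · rw [← Set.preimage_iUnion, hVc, Set.preimage_univ]
  · intro i j hij
    exact (hVd hij).preimage _

lemma sepZero_of_covDimZero {Y : Type*} [TopologicalSpace Y] (h : CovDimZero Y) : SepZero Y := by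
  intro C D hC hD hCD
  have h0 : (![Dᶜ, Cᶜ] : Fin 2 → Set Y) 0 = Dᶜ := rfl
  have h1 : (![Dᶜ, Cᶜ] : Fin 2 → Set Y) 1 = Cᶜ := rfl
  have hcov : (⋃ i, (![Dᶜ, Cᶜ] : Fin 2 → Set Y) i) = univ := by
    rw [eq_univ_iff_forall]
    intro x
    by_cases hx : x ∈ D
    · exact mem_iUnion.2 ⟨1, Set.disjoint_right.1 hCD hx⟩
    · exact mem_iUnion.2 ⟨0, hx⟩
  obtain ⟨V, hVo, hVU, hVc, hVd⟩ := h 2 ![Dᶜ, Cᶜ]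
    (by
      intro i
      fin_cases i
      · exact hD.isOpen_compl
      · exact hC.isOpen_compl) hcov
  have hdisj : Disjoint (V 0) (V 1) := hVd (by decide)
  have hmem : ∀ x : Y, x ∈ V 0 ∨ x ∈ V 1 := by
    intro x
    have hx : x ∈ ⋃ i, V i := by rw [hVc]; exact mem_univ x
    obtain ⟨i, hi⟩ := mem_iUnion.1 hx
    rcases i with ⟨iv, hiv⟩
    interval_cases iv
    · exact Or.inl hi
    · exact Or.inr hi
  refine ⟨V 0, hVo 0, ?_, ?_, ?_⟩
  · have : V 0 = (V 1)ᶜ := by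
      apply subset_antisymm hdisj.subset_compl_right
      intro x hx
      rcases hmem x with h' | h'
      · exact h'
      · exact absurd h' hx
    rw [this]
    exact (hVo 1).isClosed_compl
  · intro x hx
    rcases hmem x with h' | h'
    · exact h'
    · exact absurd hx (hVU 1 h')
  · exact Set.disjoint_left.2 fun x hx hxD => (hVU 0) hx hxD

lemma covDimZero_of_sepZero {Y : Type*} [TopologicalSpace Y] [NormalSpace Y]
    (h : SepZero Y) : CovDimZero Y := by
  intro n U hUo hUc
  obtain ⟨v, hvc, hvo, hvcl⟩ := exists_subset_iUnion_closure_subset (u := U) isClosed_univ hUo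
    (fun x _ => Set.toFinite _) hUc.ge
  have hW : ∀ i, ∃ W, IsOpen W ∧ IsClosed W ∧ closure (v i) ⊆ W ∧ W ⊆ U i := by
    intro i
    obtain ⟨E, hEo, hEc, hE1, hE2⟩ := h (closure (v i)) (U i)ᶜ isClosed_closure
      (hUo i).isClosed_compl (disjoint_compl_right.mono_left (hvcl i))
    exact ⟨E, hEo, hEc, hE1, fun x hx => not_not.1 (Set.disjoint_left.1 hE2 hx)⟩
  choose W hWo hWc hWv hWU using hW
  classical
  refine ⟨fun i => W i \ ⋃ j ∈ Finset.Iio i, W j, ?_, ?_, ?_, ?_⟩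
  · intro i
    exact (hWo i).sdiff (Set.Finite.isClosed_biUnion (Finset.Iio i).finite_toSet
      (fun j _ => hWc j))
  · exact fun i => Set.diff_subset.trans (hWU i)
  · rw [eq_univ_iff_forall]
    intro x
    have hx : ∃ i, x ∈ W i := by
      obtain ⟨i, hi⟩ := mem_iUnion.1 (hvc (mem_univ x))
      exact ⟨i, hWv i (subset_closure hi)⟩
    set S : Finset (Fin n) := Finset.univ.filter (fun i => x ∈ W i) with hS
    have hSne : S.Nonempty := ⟨hx.choose, by simp [hS, hx.choose_spec]⟩
    refine mem_iUnion.2 ⟨S.min' hSne, ?_, ?_⟩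
    · have := S.min'_mem hSne
      simp only [hS, Finset.mem_filter] at this
      exact this.2
    · intro hmem
      obtain ⟨j, hji, hxj⟩ := mem_iUnion₂.1 hmem
      have hjS : j ∈ S := by simp [hS, hxj]
      have := S.min'_le j hjS
      rw [Finset.mem_Iio] at hji
      exact absurd this (not_le.2 hji)
  · have key : ∀ i j : Fin n, i < j →
        Disjoint (W i \ ⋃ k ∈ Finset.Iio i, W k) (W j \ ⋃ k ∈ Finset.Iio j, W k) := by
      intro i j hij
      rw [Set.disjoint_left]
      intro x hxi hxj
      exact hxj.2 (mem_iUnion₂.2 ⟨i, Finset.mem_Iio.2 hij, hxi.1⟩)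
    intro i j hij
    rcases hij.lt_or_gt with h' | h'
    · exact key _ _ h'
    · exact (key _ _ h').symm

/-- The obvious homeomorphism between a subset and its preimage in a superset. -/
def subHomeo {X : Type*} [TopologicalSpace X] {A s : Set X} (h : s ⊆ A) :
    ↥s ≃ₜ ↥((fun x : A => (x : X)) ⁻¹' s) where
  toFun y := ⟨⟨y.1, h y.2⟩, y.2⟩
  invFun x := ⟨x.1.1, x.2⟩
  left_inv y := rfl
  right_inv x := rfl
  continuous_toFun := Continuous.subtype_mk
    (Continuous.subtype_mk continuous_subtype_val (fun y => h y.2)) (fun y => y.2)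
  continuous_invFun := Continuous.subtype_mk
    (continuous_subtype_val.comp continuous_subtype_val) (fun x => x.2)

/-- Countable sum theorem for dimension 0: in a separable metric space, if
`A = ⋃ n, A n` where each `A n` is closed in `A` and has topological dimension 0,
then `A` has topological dimension 0. -/
theorem stmt2 {X : Type*} [MetricSpace X] [TopologicalSpace.SeparableSpace X]
    (A : Set X) (An : ℕ → Set X)
    (hUnion : A = ⋃ n, An n)
    (hclosed : ∀ n, IsClosed ((fun x : A => (x : X)) ⁻¹' An n))
    (hdim : ∀ n, CovDimZero (An n)) :
    CovDimZero A := by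
  have hsub : ∀ n, An n ⊆ A := by
    intro n; rw [hUnion]; exact subset_iUnion _ n
  let B : ℕ → Set ↥A := fun n => (fun x : A => (x : X)) ⁻¹' An n
  have hBsep : ∀ n, SepZero ↥(B n) := fun n =>
    sepZero_of_covDimZero (covDimZero_of_homeomorph (subHomeo (hsub n)) (hdim n))
  apply covDimZero_of_sepZero
  intro C D hC hD hCD
  -- strengthened normality: disjoint open sets with disjoint closures
  have normsep : ∀ K L : Set ↥A, IsClosed K → IsClosed L → Disjoint K L →
      ∃ G H : Set ↥A, IsOpen G ∧ IsOpen H ∧ K ⊆ G ∧ L ⊆ H ∧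
        Disjoint (closure G) (closure H) := by
    intro K L hK hL hKL
    obtain ⟨G, hGo, hKG, hGL⟩ := normal_exists_closure_subset hK hL.isOpen_compl
      hKL.subset_compl_right
    obtain ⟨H, hHo, hLH, hHG⟩ := normal_exists_closure_subset hL
      isClosed_closure.isOpen_compl
      (by
        intro x hx hx'
        exact hGL hx' hx)
    exact ⟨G, H, hGo, hHo, hKG, hLH, disjoint_compl_right.mono_right hHG⟩
  -- the inductive step
  have step : ∀ (n : ℕ) (G H : Set ↥A), IsOpen G → IsOpen H →
      Disjoint (closure G) (closure H) →
      ∃ p : Set ↥A × Set ↥A, IsOpen p.1 ∧ IsOpen p.2 ∧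
        Disjoint (closure p.1) (closure p.2) ∧
        closure G ⊆ p.1 ∧ closure H ⊆ p.2 ∧ B n ⊆ p.1 ∪ p.2 := by
    intro n G H hGo hHo hGH
    obtain ⟨E', hE'o, hE'c, hKE, hEL⟩ := hBsep n
      ((fun x : ↥(B n) => (x : ↥A)) ⁻¹' closure G)
      ((fun x : ↥(B n) => (x : ↥A)) ⁻¹' closure H)
      (isClosed_closure.preimage continuous_subtype_val)
      (isClosed_closure.preimage continuous_subtype_val)
      (hGH.preimage _)
    have hEc : IsClosed (Subtype.val '' E' : Set ↥A) :=
      (hclosed n).isClosedMap_subtype_val E' hE'c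
    have hFc : IsClosed (Subtype.val '' E'ᶜ : Set ↥A) :=
      (hclosed n).isClosedMap_subtype_val E'ᶜ hE'o.isClosed_compl
    have hdisjKL : Disjoint (closure G ∪ Subtype.val '' E')
        (closure H ∪ Subtype.val '' E'ᶜ) := by
      rw [Set.disjoint_union_left]
      constructor
      · rw [Set.disjoint_union_right]
        refine ⟨hGH, ?_⟩
        rw [Set.disjoint_left]
        rintro x hxG ⟨y, hyE, rfl⟩
        exact hyE (hKE hxG)
      · rw [Set.disjoint_union_right]
        constructor
        · rw [Set.disjoint_left]
          rintro x ⟨y, hyE, rfl⟩ hxH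
          exact Set.disjoint_left.1 hEL hyE hxH
        · rw [Set.disjoint_left]
          rintro x ⟨y, hyE, rfl⟩ ⟨z, hzE, hz⟩
          cases Subtype.val_injective hz
          exact hzE hyE
    obtain ⟨G', H', hG'o, hH'o, hKG', hLH', hd'⟩ :=
      normsep (closure G ∪ Subtype.val '' E') (closure H ∪ Subtype.val '' E'ᶜ)
        (isClosed_closure.union hEc) (isClosed_closure.union hFc) hdisjKL
    refine ⟨(G', H'), hG'o, hH'o, hd', subset_union_left.trans hKG',
      subset_union_left.trans hLH', ?_⟩
    intro x hx
    by_cases hxE : (⟨x, hx⟩ : ↥(B n)) ∈ E'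
    · exact Or.inl (hKG' (Or.inr ⟨⟨x, hx⟩, hxE, rfl⟩))
    · exact Or.inr (hLH' (Or.inr ⟨⟨x, hx⟩, hxE, rfl⟩))
  obtain ⟨G0, H0, hG0o, hH0o, hCG0, hDH0, hGH0⟩ := normsep C D hC hD hCD
  choose f hfo1 hfo2 hfd hfG hfH hfB using step
  let T := {p : Set ↥A × Set ↥A //
    IsOpen p.1 ∧ IsOpen p.2 ∧ Disjoint (closure p.1) (closure p.2)}
  let seq : ℕ → T := fun n => Nat.rec
    (⟨(G0, H0), hG0o, hH0o, hGH0⟩ : T)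
    (fun k p => ⟨f k p.1.1 p.1.2 p.2.1 p.2.2.1 p.2.2.2,
      hfo1 k _ _ _ _ _, hfo2 k _ _ _ _ _, hfd k _ _ _ _ _⟩) n
  let GG : ℕ → Set ↥A := fun n => (seq n).1.1
  let HH : ℕ → Set ↥A := fun n => (seq n).1.2
  have hGGo : ∀ n, IsOpen (GG n) := fun n => (seq n).2.1
  have hHHo : ∀ n, IsOpen (HH n) := fun n => (seq n).2.2.1
  have hd : ∀ n, Disjoint (closure (GG n)) (closure (HH n)) := fun n => (seq n).2.2.2
  have hstepG : ∀ n, closure (GG n) ⊆ GG (n + 1) :=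
    fun n => hfG n (GG n) (HH n) (hGGo n) (hHHo n) (hd n)
  have hstepH : ∀ n, closure (HH n) ⊆ HH (n + 1) :=
    fun n => hfH n (GG n) (HH n) (hGGo n) (hHHo n) (hd n)
  have hstepB : ∀ n, B n ⊆ GG (n + 1) ∪ HH (n + 1) :=
    fun n => hfB n (GG n) (HH n) (hGGo n) (hHHo n) (hd n)
  have hmonoG : Monotone GG :=
    monotone_nat_of_le_succ fun n => subset_closure.trans (hstepG n)
  have hmonoH : Monotone HH :=
    monotone_nat_of_le_succ fun n => subset_closure.trans (hstepH n)
  have hUV : Disjoint (⋃ n, GG n) (⋃ n, HH n) := by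
    rw [Set.disjoint_left]
    intro x hxU hxV
    obtain ⟨n, hn⟩ := mem_iUnion.1 hxU
    obtain ⟨m, hm⟩ := mem_iUnion.1 hxV
    exact Set.disjoint_left.1 (hd (max n m))
      (subset_closure (hmonoG (le_max_left n m) hn))
      (subset_closure (hmonoH (le_max_right n m) hm))
  have hcoverUV : (⋃ n, GG n) ∪ (⋃ n, HH n) = univ := by
    rw [eq_univ_iff_forall]
    intro x
    have hx : (x : X) ∈ ⋃ n, An n := by rw [← hUnion]; exact x.2
    obtain ⟨n, hn⟩ := mem_iUnion.1 hx
    rcases hstepB n hn with h' | h'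
    · exact Or.inl (mem_iUnion.2 ⟨n + 1, h'⟩)
    · exact Or.inr (mem_iUnion.2 ⟨n + 1, h'⟩)
  refine ⟨⋃ n, GG n, isOpen_iUnion fun n => hGGo n, ?_, ?_, ?_⟩
  · have : (⋃ n, GG n) = (⋃ n, HH n)ᶜ := by
      apply subset_antisymm hUV.subset_compl_right
      intro x hx
      have hx2 : x ∈ (⋃ n, GG n) ∪ ⋃ n, HH n := by
        rw [hcoverUV]; exact mem_univ x
      rcases hx2 with h' | h'
      · exact h'
      · exact absurd h' hx
    rw [this]
    exact (isOpen_iUnion fun n => hHHo n).isClosed_compl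
  · exact hCG0.trans (subset_iUnion GG 0)
  · exact Set.disjoint_left.2 fun x hx hxD =>
      Set.disjoint_left.1 hUV hx (mem_iUnion.2 ⟨0, hDH0 hxD⟩)
end

section
/- Let Σ be a compact hypersurface in a complete Riemannian manifold M with unit normal field N_Σ, and suppose the shape operator identity s^+(Y_+) − s^−(Y_−) = −2⟨N_−, N_K⟩ s_K(Y) holds at a reflection point, where s_K is positive definite with eigenvalues ≥ κ_min > 0 and the incidence angle satisfies ⟨−N_−, N_K⟩ ≥ cos φ_0 > 0. If s^− is positive definite with eigenvalues ≥ θ > 0, then s^+ is positive definite with eigenvalues bounded below by min(θ, 2 κ_min cos φ_0) up to the induced identification of tangent vectors. -/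
open RealInnerProductSpace

/-- Linear-algebraic core of the billiard reflection law for second fundamental
forms: under the reflection identity
`s⁺(Y₊,Y₊) − s⁻(Y₋,Y₋) = −2⟨N₋,N_K⟩ s_K(Y,Y)` for `Y ⟂ N_K`, positive
definiteness of `s_K` (eigenvalues ≥ κ) and of `s⁻` (eigenvalues ≥ θ), together
with the angle bound `⟨−N₋,N_K⟩ ≥ cos φ₀ > 0`, the form `s⁺` is bounded below by
`min θ (2 κ cos φ₀)`. -/
theorem stmt10 {V : Type*} [NormedAddCommGroup V] [InnerProductSpace ℝ V]
    [FiniteDimensional ℝ V]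
    (Nm Np NK : V) (hNm : ‖Nm‖ = 1) (hNp : ‖Np‖ = 1) (hNK : ‖NK‖ = 1)
    (hrefl : Np = Nm - (2 * ⟪Nm, NK⟫) • NK)
    (κ θ φ₀ : ℝ) (hκ : 0 < κ) (hθ : 0 < θ) (hφ : 0 < Real.cos φ₀)
    (hangle : Real.cos φ₀ ≤ ⟪-Nm, NK⟫)
    (sm sp sK : V →ₗ[ℝ] V →ₗ[ℝ] ℝ)
    (hid : ∀ Y : V, ⟪Y, NK⟫ = 0 →
      sp (Y - ⟪Y, Np⟫ • Np) (Y - ⟪Y, Np⟫ • Np)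
        - sm (Y - ⟪Y, Nm⟫ • Nm) (Y - ⟪Y, Nm⟫ • Nm)
        = -2 * ⟪Nm, NK⟫ * sK Y Y)
    (hK : ∀ Y : V, ⟪Y, NK⟫ = 0 → κ * ‖Y‖ ^ 2 ≤ sK Y Y)
    (hminus : ∀ Z : V, ⟪Z, Nm⟫ = 0 → θ * ‖Z‖ ^ 2 ≤ sm Z Z) :
    ∀ Y : V, ⟪Y, NK⟫ = 0 →
      min θ (2 * κ * Real.cos φ₀) * ‖Y - ⟪Y, Np⟫ • Np‖ ^ 2
        ≤ sp (Y - ⟪Y, Np⟫ • Np) (Y - ⟪Y, Np⟫ • Np) := by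
  intro Y hY
  set a : ℝ := ⟪Y, Nm⟫ with ha
  have hYp : ⟪Y, Np⟫ = a := by
    rw [hrefl, inner_sub_right, real_inner_smul_right, hY]; ring
  have hperp : ⟪Y - a • Nm, Nm⟫ = 0 := by
    rw [inner_sub_left, real_inner_smul_left, real_inner_self_eq_norm_sq, hNm]
    ring
  have hnorm : ‖Y - ⟪Y, Np⟫ • Np‖ ^ 2 = ‖Y - a • Nm‖ ^ 2 := by
    rw [hYp]
    rw [← real_inner_self_eq_norm_sq, ← real_inner_self_eq_norm_sq]
    simp only [inner_sub_sub_self, real_inner_smul_left, real_inner_smul_right,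
      real_inner_self_eq_norm_sq, hNm, hNp, hYp, real_inner_comm Y Nm, ← ha]
    have h1 : ⟪Np, Y⟫ = a := by rw [real_inner_comm]; exact hYp
    rw [h1, norm_smul, norm_smul, hNm, hNp]
  have hKpos : 0 ≤ -2 * ⟪Nm, NK⟫ * sK Y Y := by
    have h1 : (0:ℝ) ≤ -2 * ⟪Nm, NK⟫ := by
      have : ⟪-Nm, NK⟫ = -⟪Nm, NK⟫ := inner_neg_left Nm NK
      nlinarith
    have h2 : (0:ℝ) ≤ sK Y Y := le_trans (by positivity) (hK Y hY)
    positivity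
  have hsm := hminus (Y - a • Nm) hperp
  have hid' := hid Y hY
  rw [hYp] at hid' ⊢
  calc min θ (2 * κ * Real.cos φ₀) * ‖Y - a • Np‖ ^ 2
      ≤ θ * ‖Y - a • Np‖ ^ 2 := by
        have := min_le_left θ (2 * κ * Real.cos φ₀)
        nlinarith [sq_nonneg (‖Y - a • Np‖)]
    _ = θ * ‖Y - a • Nm‖ ^ 2 := by rw [← hYp] at hnorm ⊢; rw [hnorm]
    _ ≤ sm (Y - a • Nm) (Y - a • Nm) := hsm
    _ ≤ sp (Y - a • Np) (Y - a • Np) := by linarith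
end
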